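/- arXiv:0812.4470 — 2 statements merged into one kernel-verified Lean document; each statement's English description precedes it below -/
import Mathlib

section
/- For every integer k ≥ 7, the Thue–Morse word t contains two distinct factors of length k each of which has 01 as a prefix and 10 as a suffix (i.e., two distinct factors of the form 01x10). -/
/-- The Thue–Morse morphism θ (0 ↦ 01, 1 ↦ 10), with 0 = `false`, 1 = `true`,
applied letterwise to a word. -/
def tmMap (w : List Bool) : List Bool :=
  w.flatMap (fun b => if b then [true, false] else [false, true])

/-- A word is cubefree if it contains no non-empty factor of the form `x ++ x ++ x`. -/
def Cubefree (w : List Bool) : Prop :=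
  ∀ x : List Bool, x ≠ [] → ¬ (x ++ x ++ x) <:+: w

/-- `w` is a factor of the Thue–Morse word `t = θ^ω(0)`: since the words `θ^m(0)`
are prefixes of `t` whose lengths tend to infinity, this holds iff `w` is an
infix of `θ^m(0)` for some `m`. -/
def FactorTM (w : List Bool) : Prop :=
  ∃ m : ℕ, w <:+: tmMap^[m] [false]

/-- The binary morphism determined by `h : Bool → List Bool` is cubefree. -/
def CubefreeMorphism (h : Bool → List Bool) : Prop :=
  ∀ w : List Bool, Cubefree w → Cubefree (w.flatMap h)

/-!
Index the Thue–Morse word as `t = tm 0 tm 1 ⋯`, so that `tm (2n) = tm n` and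
`tm (2n + 1) = !tm n`. Then `θ` sends the window of `tm` of length `n` at `i` to the window of
length `2n` at `2i`, so every window is a factor of `t`, and a factor `01x10` of length `n + 4`
is a window at some `i` with `tm i = 0`, `tm (i + 1) = 1`, `tm (i + n + 2) = 1`,
`tm (i + n + 3) = 0`. Halving positions turns such constraints into constraints on fewer
letters at about half the distance; bottoming out, every pair of letters occurs at every
positive distance. For even `n` two such windows start at even positions and `x` begins with
`θ(0)` in one and `θ(1)` in the other. For odd `n` one window starts at an even position, so
that `x` begins with `01` or `10`, and one at an odd position, where `x` begins with `00`
because `111` does not occur in `t`.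
-/

-- `tm n` is the parity of the binary digit sum of `n`, i.e. the `n`-th letter of `t`.
def tm (n : ℕ) : Bool := Nat.binaryRec false (fun b _ t => b ^^ t) n

theorem tm_bit (b : Bool) (n : ℕ) : tm (Nat.bit b n) = (b ^^ tm n) :=
  Nat.binaryRec_eq b n (.inl rfl)

@[simp] theorem tm_two_mul (n : ℕ) : tm (2 * n) = tm n := by
  simpa [Nat.bit] using tm_bit false n

@[simp] theorem tm_two_mul_add_one (n : ℕ) : tm (2 * n + 1) = !tm n := by
  simpa [Nat.bit] using tm_bit true n

theorem tm_add_two_ne_of_tm_eq {m : ℕ} (h : tm m = tm (m + 1)) : tm (m + 2) ≠ tm (m + 1) := by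
  obtain ⟨n, rfl | rfl⟩ := Nat.even_or_odd' m
  · simp at h
  · rw [show 2 * n + 1 + 1 = 2 * (n + 1) by ring, show 2 * n + 1 + 2 = 2 * (n + 1) + 1 by ring]
    simp

theorem exists_tm_eq_tm_add_eq {d : ℕ} (hd : 1 ≤ d) (a b : Bool) :
    ∃ m, tm m = a ∧ tm (m + d) = b := by
  induction d using Nat.strong_induction_on generalizing b with
  | _ d ih =>
  obtain ⟨e, rfl | rfl⟩ := Nat.even_or_odd' d
  · obtain ⟨m, ha, hb⟩ := ih e (by omega) (by omega) b
    exact ⟨2 * m, by simpa, by rwa [← mul_add, tm_two_mul]⟩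
  rcases Nat.eq_zero_or_pos e with rfl | he
  · cases a <;> cases b
    exacts [⟨5, by decide⟩, ⟨0, by decide⟩, ⟨2, by decide⟩, ⟨1, by decide⟩]
  obtain ⟨m, ha, hb⟩ := ih e (by omega) he (!b)
  exact ⟨2 * m, by simpa, by rw [← add_assoc, ← mul_add]; simp [hb]⟩

theorem exists_tm_eq_tm_succ_eq_not_tm_add_eq {d : ℕ} (hd : 2 ≤ d) (a c : Bool) :
    ∃ m, tm m = a ∧ tm (m + 1) = !a ∧ tm (m + d) = c := by
  obtain ⟨e, rfl | rfl⟩ := Nat.even_or_odd' d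
  · obtain ⟨n, ha, hc⟩ := exists_tm_eq_tm_add_eq (d := e) (by omega) a c
    exact ⟨2 * n, by simpa, by simpa, by rwa [← mul_add, tm_two_mul]⟩
  · obtain ⟨n, ha, hc⟩ := exists_tm_eq_tm_add_eq (d := e) (by omega) a (!c)
    exact ⟨2 * n, by simpa, by simpa, by rw [← add_assoc, ← mul_add]; simpa⟩

theorem exists_tm_eq_tm_succ_eq_tm_add_eq {d : ℕ} (hd : 3 ≤ d) (a b c : Bool) :
    ∃ m, tm m = a ∧ tm (m + 1) = b ∧ tm (m + d) = c := by
  obtain rfl | rfl : b = !a ∨ a = b := by cases a <;> cases b <;> simp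
  · exact exists_tm_eq_tm_succ_eq_not_tm_add_eq (by omega) a c
  -- `aa` can only occur at an odd position `2n + 1`, straddling `θ(tm n) θ(tm (n + 1))`
  obtain ⟨e, rfl | rfl⟩ := Nat.even_or_odd' d
  · obtain ⟨n, ha, hb, hc⟩ :=
      exists_tm_eq_tm_succ_eq_not_tm_add_eq (d := e) (by omega) (!a) (!c)
    refine ⟨2 * n + 1, by simpa, ?_, ?_⟩
    · rw [show 2 * n + 1 + 1 = 2 * (n + 1) by ring]; simpa using hb
    · rw [show 2 * n + 1 + 2 * e = 2 * (n + e) + 1 by ring]; simpa using hc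
  · obtain ⟨n, ha, hb, hc⟩ :=
      exists_tm_eq_tm_succ_eq_not_tm_add_eq (d := e + 1) (by omega) (!a) c
    refine ⟨2 * n + 1, by simpa, ?_, ?_⟩
    · rw [show 2 * n + 1 + 1 = 2 * (n + 1) by ring]; simpa using hb
    · rw [show 2 * n + 1 + (2 * e + 1) = 2 * (n + (e + 1)) by ring]; simpa using hc

theorem exists_tm_eq_tm_add_eq_tm_add_succ_eq_not {d : ℕ} (hd : 1 ≤ d) (a b : Bool) :
    ∃ m, tm m = a ∧ tm (m + d) = b ∧ tm (m + d + 1) = !b := by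
  obtain ⟨e, rfl | rfl⟩ := Nat.even_or_odd' d
  · obtain ⟨n, ha, hb⟩ := exists_tm_eq_tm_add_eq (d := e) (by omega) a b
    exact ⟨2 * n, by simpa, by rwa [← mul_add, tm_two_mul], by rw [← mul_add]; simpa⟩
  · obtain ⟨n, ha, hb⟩ := exists_tm_eq_tm_add_eq (d := e + 1) (by omega) (!a) b
    refine ⟨2 * n + 1, by simp [ha], ?_, ?_⟩
    · rw [show 2 * n + 1 + (2 * e + 1) = 2 * (n + (e + 1)) by ring]; simpa
    · rw [show 2 * n + 1 + (2 * e + 1) + 1 = 2 * (n + (e + 1)) + 1 by ring]; simpa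

theorem exists_tm_eq_tm_add_eq_tm_add_succ_eq {d : ℕ} (hd : 2 ≤ d) (a b : Bool) :
    ∃ m, tm m = a ∧ tm (m + d) = b ∧ tm (m + d + 1) = b := by
  obtain ⟨e, rfl | rfl⟩ := Nat.even_or_odd' d
  · obtain ⟨n, ha, hb, hb'⟩ :=
      exists_tm_eq_tm_add_eq_tm_add_succ_eq_not (d := e) (by omega) (!a) (!b)
    refine ⟨2 * n + 1, by simp [ha], ?_, ?_⟩
    · rw [show 2 * n + 1 + 2 * e = 2 * (n + e) + 1 by ring]; simpa
    · rw [show 2 * n + 1 + 2 * e + 1 = 2 * (n + e + 1) by ring]; simpa using hb'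
  · obtain ⟨n, ha, hb, hb'⟩ :=
      exists_tm_eq_tm_add_eq_tm_add_succ_eq_not (d := e) (by omega) a (!b)
    refine ⟨2 * n, by simpa, ?_, ?_⟩
    · rw [show 2 * n + (2 * e + 1) = 2 * (n + e) + 1 by ring]; simpa
    · rw [show 2 * n + (2 * e + 1) + 1 = 2 * (n + e + 1) by ring]; simpa using hb'

def tmFactor (i n : ℕ) : List Bool := (List.range' i n).map tm

@[simp] theorem length_tmFactor (i n : ℕ) : (tmFactor i n).length = n := by
  simp [tmFactor]

theorem tmFactor_succ (i n : ℕ) : tmFactor i (n + 1) = tm i :: tmFactor (i + 1) n := by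
  simp [tmFactor, List.range'_succ]

theorem tmFactor_two (i : ℕ) : tmFactor i 2 = [tm i, tm (i + 1)] := rfl

theorem tmFactor_add (i m n : ℕ) : tmFactor i (m + n) = tmFactor i m ++ tmFactor (i + m) n := by
  rw [tmFactor, tmFactor, tmFactor, ← List.map_append, ← List.range'_append, one_mul]

theorem tmMap_cons (b : Bool) (w : List Bool) : tmMap (b :: w) = b :: (!b) :: tmMap w := by
  cases b <;> rfl

theorem tmMap_tmFactor (i n : ℕ) : tmMap (tmFactor i n) = tmFactor (2 * i) (2 * n) := by
  induction n generalizing i with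
  | zero => rfl
  | succ n ih =>
    rw [tmFactor_succ, tmMap_cons, ih, show 2 * (n + 1) = 2 * n + 1 + 1 by ring,
      tmFactor_succ, tmFactor_succ, tm_two_mul, tm_two_mul_add_one, mul_add]

theorem tmMap_iterate (m : ℕ) : tmMap^[m] [false] = tmFactor 0 (2 ^ m) := by
  induction m with
  | zero => rfl
  | succ m ih => rw [Function.iterate_succ_apply', ih, tmMap_tmFactor, pow_succ', mul_zero]

theorem factorTM_tmFactor (i n : ℕ) : FactorTM (tmFactor i n) := by
  refine ⟨i + n, ?_⟩
  obtain ⟨r, hr⟩ : ∃ r, 2 ^ (i + n) = i + n + r :=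
    Nat.exists_eq_add_of_le (Nat.lt_two_pow_self).le
  rw [tmMap_iterate, hr, tmFactor_add, tmFactor_add, zero_add]
  exact ⟨_, _, rfl⟩

def Framed (i n : ℕ) : Prop :=
  tm i = false ∧ tm (i + 1) = true ∧ tm (i + n + 2) = true ∧ tm (i + n + 3) = false

theorem Framed.factorTM {i n : ℕ} (h : Framed i n) :
    FactorTM ([false, true] ++ tmFactor (i + 2) n ++ [true, false]) := by
  obtain ⟨h0, h1, h2, h3⟩ := h
  have := factorTM_tmFactor i (2 + n + 2)
  rw [tmFactor_add, tmFactor_add, tmFactor_two, tmFactor_two,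
    show i + (2 + n) = i + n + 2 by ring] at this
  simpa [h0, h1, h2, h3] using this

theorem tmFactor_ne_of_ne {i i' n : ℕ} (hn : 2 ≤ n)
    (h : (tm i, tm (i + 1)) ≠ (tm i', tm (i' + 1))) :
    tmFactor i n ≠ tmFactor i' n := by
  obtain ⟨n, rfl⟩ := Nat.exists_eq_add_of_le' hn
  simp_all [tmFactor_succ]

theorem exists_framed_two_mul {h : ℕ} (hh : 2 ≤ h) (c : Bool) :
    ∃ i, Framed i (2 * h) ∧ tm (i + 2) = c := by
  obtain ⟨m, h0, h1, h2⟩ :=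
    exists_tm_eq_tm_succ_eq_tm_add_eq (d := h + 1) (by omega) false c true
  refine ⟨2 * m, ⟨by simpa, by simpa, ?_, ?_⟩, ?_⟩
  · rw [show 2 * m + 2 * h + 2 = 2 * (m + (h + 1)) by ring]; simpa
  · rw [show 2 * m + 2 * h + 3 = 2 * (m + (h + 1)) + 1 by ring]; simpa
  · rw [show 2 * m + 2 = 2 * (m + 1) by ring]; simpa

theorem exists_framed_two_mul_add_three_alternating (j : ℕ) :
    ∃ i, Framed i (2 * j + 3) ∧ tm (i + 3) = !tm (i + 2) := by
  obtain ⟨m, h0, h1, h2⟩ :=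
    exists_tm_eq_tm_add_eq_tm_add_succ_eq (d := j + 2) (by omega) false false
  refine ⟨2 * m, ⟨by simpa, by simpa, ?_, ?_⟩, ?_⟩
  · rw [show 2 * m + (2 * j + 3) + 2 = 2 * (m + (j + 2)) + 1 by ring]; simpa
  · rw [show 2 * m + (2 * j + 3) + 3 = 2 * (m + (j + 2) + 1) by ring]; simpa
  · rw [show 2 * m + 2 = 2 * (m + 1) by ring, show 2 * m + 3 = 2 * (m + 1) + 1 by ring]; simp

theorem exists_framed_two_mul_add_three_repeating (j : ℕ) :
    ∃ i, Framed i (2 * j + 3) ∧ tm (i + 2) = false ∧ tm (i + 3) = false := by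
  obtain ⟨m, h0, h1, h2⟩ :=
    exists_tm_eq_tm_succ_eq_tm_add_eq (d := j + 3) (by omega) true true true
  have h3 : tm (m + 2) = false := by simpa [h1] using tm_add_two_ne_of_tm_eq (h0.trans h1.symm)
  refine ⟨2 * m + 1, ⟨by simpa, ?_, ?_, ?_⟩, ?_, ?_⟩
  · rw [show 2 * m + 1 + 1 = 2 * (m + 1) by ring]; simpa
  · rw [show 2 * m + 1 + (2 * j + 3) + 2 = 2 * (m + (j + 3)) by ring]; simpa
  · rw [show 2 * m + 1 + (2 * j + 3) + 3 = 2 * (m + (j + 3)) + 1 by ring]; simpa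
  · rw [show 2 * m + 1 + 2 = 2 * (m + 1) + 1 by ring]; simpa
  · rw [show 2 * m + 1 + 3 = 2 * (m + 2) by ring]; simpa

theorem exists_framed_pair_ne {n : ℕ} (hn : 3 ≤ n) :
    ∃ i i', Framed i n ∧ Framed i' n ∧ tmFactor (i + 2) n ≠ tmFactor (i' + 2) n := by
  obtain ⟨h, rfl | rfl⟩ := Nat.even_or_odd' n
  · obtain ⟨i, hi, hc⟩ := exists_framed_two_mul (h := h) (by omega) false
    obtain ⟨i', hi', hc'⟩ := exists_framed_two_mul (h := h) (by omega) true
    exact ⟨i, i', hi, hi', tmFactor_ne_of_ne (by omega) (by simp [hc, hc'])⟩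
  · obtain ⟨j, rfl⟩ : ∃ j, h = j + 1 := ⟨h - 1, by omega⟩
    rw [show 2 * (j + 1) + 1 = 2 * j + 3 by ring]
    obtain ⟨i, hi, hc⟩ := exists_framed_two_mul_add_three_alternating j
    obtain ⟨i', hi', hc'⟩ := exists_framed_two_mul_add_three_repeating j
    refine ⟨i, i', hi, hi', tmFactor_ne_of_ne (by omega) ?_⟩
    cases h : tm (i + 2) <;> simp_all

theorem stmt3 (k : ℕ) (hk : 7 ≤ k) :
    ∃ x y : List Bool, x ≠ y ∧
      ([false, true] ++ x ++ [true, false]).length = k ∧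
      ([false, true] ++ y ++ [true, false]).length = k ∧
      FactorTM ([false, true] ++ x ++ [true, false]) ∧
      FactorTM ([false, true] ++ y ++ [true, false]) := by
  obtain ⟨n, rfl⟩ : ∃ n, k = n + 4 := ⟨k - 4, by omega⟩
  obtain ⟨i, i', hi, hi', hne⟩ := exists_framed_pair_ne (n := n) (by omega)
  exact ⟨_, _, hne, by simp, by simp, hi.factorTM, hi'.factorTM⟩
end

section
/- The 13-uniform binary morphism φ₁₃ defined by φ₁₃(0) = 0010010110011 and φ₁₃(1) = 0010011001011 is cubefree: φ₁₃(w) is cubefree for every cubefree binary word w. -/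
/-!
`φ₁₃` is 13-uniform and synchronizing: `φ₁₃ a` occurs in `φ₁₃ b ++ φ₁₃ c` only at offsets 0
and 13, so in `φ₁₃ w` the block boundaries can be recognised. Hence the period of a cube
`x ++ x ++ x` in `φ₁₃ w` with `|x| ≥ 13` is a multiple `13 m`, and since letter 9 of `φ₁₃ b`
is `b`, reading that letter in consecutive blocks of the cube exhibits a cube of period `m`
in `w`. A cube with `|x| < 13` fits into the image of a factor of `w` of length 4, and the
images of the cubefree words of length at most 4 are checked by computation.
-/

open List

section Cubes

variable {α : Type*}

theorem take_drop_infix (l : List α) (i k : ℕ) : (l.drop i).take k <:+: l :=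
  (take_prefix _ _).isInfix.trans (drop_suffix _ _).isInfix

def HasCubeAt (w : List α) (a m : ℕ) : Prop :=
  0 < m ∧ a + 3 * m ≤ w.length ∧ ((w.drop a).take (3 * m)).HasPeriod m

instance [DecidableEq α] (w : List α) (a m : ℕ) : Decidable (HasCubeAt w a m) :=
  inferInstanceAs (Decidable (_ ∧ _ ∧ _ <+: _))

theorem hasCubeAt_iff_getElem? {w : List α} {a m : ℕ} :
    HasCubeAt w a m ↔ 0 < m ∧ a + 3 * m ≤ w.length ∧ ∀ j < 2 * m, w[a + j]? = w[a + j + m]? := by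
  refine and_congr_right fun _ => and_congr_right fun hlen => ?_
  simp only [hasPeriod_iff_getElem?, length_take, length_drop, getElem?_take, getElem?_drop]
  refine forall_congr' fun j => ?_
  rw [show min (3 * m) (w.length - a) - m = 2 * m by omega]
  exact imp_congr_right fun hj => by rw [if_pos (by omega), if_pos (by omega), add_assoc]

theorem HasCubeAt.take_drop_eq {w : List α} {a m : ℕ} (h : HasCubeAt w a m) {s k : ℕ}
    (hs : a ≤ s) (hk : s + k ≤ a + 2 * m) :
    (w.drop s).take k = (w.drop (s + m)).take k := by
  obtain ⟨-, -, hper⟩ := hasCubeAt_iff_getElem?.1 h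
  ext j : 1
  simp only [getElem?_take, getElem?_drop]
  split_ifs with hj
  · have := hper (s - a + j) (by omega)
    rwa [show a + (s - a + j) = s + j by omega, add_right_comm] at this
  · rfl

theorem HasCubeAt.drop_take {w : List α} {a m : ℕ} (h : HasCubeAt w a m) {s k : ℕ}
    (hs : s ≤ a) (hk : a + 3 * m ≤ s + k) : HasCubeAt ((w.drop s).take k) (a - s) m := by
  obtain ⟨hm, hlen, hper⟩ := hasCubeAt_iff_getElem?.1 h
  refine hasCubeAt_iff_getElem?.2
    ⟨hm, by simp only [length_take, length_drop]; omega, fun j hj => ?_⟩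
  simp only [getElem?_take, getElem?_drop]
  rw [if_pos (by omega), if_pos (by omega), show s + (a - s + j) = a + j by omega,
    show s + (a - s + j + m) = a + j + m by omega]
  exact hper j hj

theorem hasPeriod_cube (x : List α) : (x ++ x ++ x).HasPeriod x.length :=
  ⟨x, by simp⟩

theorem exists_hasCubeAt_of_cube_infix {x w : List α} (hx : x ≠ []) (h : x ++ x ++ x <:+: w) :
    ∃ a, HasCubeAt w a x.length := by
  obtain ⟨p, s, rfl⟩ := h
  refine ⟨p.length, length_pos_iff.2 hx, by simp; omega, ?_⟩
  rw [append_assoc, drop_left, take_left' (by simp; omega)]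
  exact hasPeriod_cube x

theorem List.HasPeriod.take_append_take_append_take {u : List α} {m : ℕ} (h : u.HasPeriod m)
    (hu : u.length = 3 * m) : u.take m ++ u.take m ++ u.take m = u := by
  obtain ⟨t, ht⟩ := h.drop_prefix
  have hdrop : u.drop m = u.take (2 * m) := by
    conv_rhs => rw [← ht]
    rw [take_left' (by simp; omega)]
  calc _ = u.take m ++ (u.take m ++ (u.drop m).take m) := by
        rw [hdrop, take_take, min_eq_left (by omega), append_assoc]
    _ = u := by rw [← take_add, ← two_mul, ← hdrop, take_append_drop]

theorem HasCubeAt.exists_cube_infix {w : List α} {a m : ℕ} (h : HasCubeAt w a m) :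
    ∃ x, x ≠ [] ∧ x ++ x ++ x <:+: w := by
  obtain ⟨hm, hlen, hper⟩ := h
  have hu : ((w.drop a).take (3 * m)).length = 3 * m := by simp; omega
  refine ⟨((w.drop a).take (3 * m)).take m, ne_nil_of_length_pos (by simp; omega), ?_⟩
  rw [hper.take_append_take_append_take hu]
  exact take_drop_infix w a _

end Cubes

theorem cubefree_iff_forall_not_hasCubeAt {w : List Bool} :
    Cubefree w ↔ ∀ a m, ¬HasCubeAt w a m := by
  refine ⟨fun hw a m h => ?_, fun h x hx hinf => ?_⟩
  · obtain ⟨x, hx, hinf⟩ := h.exists_cube_infix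
    exact hw x hx hinf
  · obtain ⟨a, ha⟩ := exists_hasCubeAt_of_cube_infix hx hinf
    exact h a _ ha

theorem Cubefree.not_hasCubeAt {w : List Bool} (hw : Cubefree w) (a m : ℕ) : ¬HasCubeAt w a m :=
  cubefree_iff_forall_not_hasCubeAt.1 hw a m

theorem Cubefree.infix {u w : List Bool} (hw : Cubefree w) (h : u <:+: w) : Cubefree u :=
  fun x hx hu => hw x hx (hu.trans h)

-- Bounded search over start and period, so that `decide` can evaluate `Cubefree`.
instance : DecidablePred Cubefree := fun w =>
  decidable_of_iff (∀ a < w.length, ∀ m < w.length, ¬HasCubeAt w a m) <| by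
    refine Iff.trans ⟨fun h a m ha => ?_, fun h a _ m _ => h a m⟩
      cubefree_iff_forall_not_hasCubeAt.symm
    have := ha.1
    have := ha.2.1
    exact h a (by omega) m (by omega) ha

section UniformMorphism

variable {α β : Type*} {h : α → List β} {L : ℕ}

theorem length_flatMap_of_uniform (hL : ∀ b, (h b).length = L) (w : List α) :
    (w.flatMap h).length = L * w.length := by
  induction w with
  | nil => rfl
  | cons b w ih => rw [flatMap_cons, length_append, ih, hL, length_cons]; ring

theorem drop_flatMap_of_uniform (hL : ∀ b, (h b).length = L) (w : List α) (k : ℕ) :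
    (w.flatMap h).drop (L * k) = (w.drop k).flatMap h := by
  induction w generalizing k with
  | nil => simp
  | cons b w ih =>
    cases k with
    | zero => simp
    | succ k =>
      rw [flatMap_cons, mul_add_one, add_comm, ← hL b, drop_length_add_append, hL, ih]; rfl

theorem take_flatMap_of_uniform (hL : ∀ b, (h b).length = L) (w : List α) (k : ℕ) :
    (w.flatMap h).take (L * k) = (w.take k).flatMap h := by
  induction w generalizing k with
  | nil => simp
  | cons b w ih =>
    cases k with
    | zero => simp
    | succ k =>
      rw [flatMap_cons, mul_add_one, add_comm, ← hL b, take_length_add_append, hL, ih]; rfl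

theorem getElem?_flatMap_of_uniform (hL : ∀ b, (h b).length = L) (w : List α) (j : ℕ) {o : ℕ}
    (ho : o < L) : (w.flatMap h)[L * j + o]? = w[j]?.bind fun b => (h b)[o]? := by
  rw [← getElem?_drop, drop_flatMap_of_uniform hL]
  cases hw : w.drop j with
  | nil => simp [drop_eq_nil_iff.1 hw]
  | cons b t =>
    have hb : w[j]? = some b := by rw [← Nat.add_zero j, ← getElem?_drop, hw]; rfl
    rw [flatMap_cons, getElem?_append_left (by rw [hL]; exact ho), hb]
    rfl

theorem take_drop_flatMap_of_uniform (hL : ∀ b, (h b).length = L) {w : List α} {q r : ℕ}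
    (hr : r ≤ L) (hq : q + 1 < w.length) :
    ((w.flatMap h).drop (L * q + r)).take L = ((h w[q] ++ h w[q + 1]).drop r).take L := by
  rw [← drop_drop, drop_flatMap_of_uniform hL, drop_eq_getElem_cons (i := q) (by omega),
    drop_eq_getElem_cons (i := q + 1) hq, flatMap_cons, flatMap_cons, ← append_assoc,
    drop_append_of_le_length (by simp [hL]; omega),
    take_append_of_le_length (by simp [hL]; omega)]

theorem HasCubeAt.take_drop_flatMap (hL : ∀ b, (h b).length = L) {w : List α} {i n k : ℕ}
    (hc : HasCubeAt (w.flatMap h) i n) (hk : i % L + 3 * n ≤ L * k) :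
    HasCubeAt (((w.drop (i / L)).take k).flatMap h) (i % L) n := by
  have hi := Nat.div_add_mod i L
  rw [← take_flatMap_of_uniform hL, ← drop_flatMap_of_uniform hL]
  convert hc.drop_take (s := L * (i / L)) (k := L * k) (by omega) (by omega) using 1
  omega

theorem HasCubeAt.dvd_of_flatMap (hL : ∀ b, (h b).length = L)
    (hsync : ∀ a b c, ∀ r < L, 0 < r → ((h b ++ h c).drop r).take L ≠ h a)
    {w : List α} {i n : ℕ} (hc : HasCubeAt (w.flatMap h) i n) (hn : L ≤ n) : L ∣ n := by
  have hn0 := hc.1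
  have hlen := hc.2.1
  rw [length_flatMap_of_uniform hL] at hlen
  have hL0 : 0 < L := Nat.pos_of_ne_zero fun hL0 => by simp [hL0] at hlen; omega
  obtain ⟨q, hq_def⟩ : ∃ q, q = i / L + 1 := ⟨_, rfl⟩
  have hLq : i < L * q ∧ L * q ≤ i + L := by
    have := Nat.div_add_mod i L
    have := Nat.mod_lt i hL0
    rw [hq_def, mul_add_one]
    omega
  obtain ⟨q', r, hr, hT⟩ : ∃ q' r, r < L ∧ L * q' + r = L * q + n :=
    ⟨_, _, Nat.mod_lt _ hL0, Nat.div_add_mod _ _⟩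
  rcases Nat.eq_zero_or_pos r with rfl | hr0
  · exact (Nat.dvd_add_right (dvd_mul_right L q)).1 (hT ▸ dvd_mul_right L q')
  exfalso
  have hq : q + 1 < w.length :=
    Nat.lt_of_mul_lt_mul_left (a := L) (by rw [mul_add_one]; omega)
  have hq' : q' + 1 < w.length :=
    Nat.lt_of_mul_lt_mul_left (a := L) (by rw [mul_add_one]; omega)
  have hblock := take_drop_flatMap_of_uniform hL (Nat.zero_le L) hq
  rw [add_zero, drop_zero, take_left' (hL _)] at hblock
  have hshift := take_drop_flatMap_of_uniform hL hr.le hq'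
  rw [hT] at hshift
  refine hsync w[q] w[q'] w[q' + 1] r hr hr0 ?_
  rw [← hshift, ← hblock]
  exact (hc.take_drop_eq (by omega) (by omega)).symm

theorem HasCubeAt.of_flatMap (hL : ∀ b, (h b).length = L) {g : α → β} (hg : g.Injective)
    {d : ℕ} (hd : d < L) (hgd : ∀ b, (h b)[d]? = some (g b))
    {w : List α} {i m : ℕ} (hc : HasCubeAt (w.flatMap h) i (L * m)) : ∃ a, HasCubeAt w a m := by
  obtain ⟨hm0, hlen, hper⟩ := hasCubeAt_iff_getElem?.1 hc
  have hletter (j : ℕ) : w[j]?.map g = (w.flatMap h)[L * j + d]? := by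
    rw [getElem?_flatMap_of_uniform hL w j hd, Option.map_eq_bind]
    simp only [hgd]; rfl
  have hlt (j : ℕ) (hj : L * j + d < (w.flatMap h).length) : j < w.length := by
    by_contra hw
    rw [not_lt, ← getElem?_eq_none_iff, ← Option.map_eq_none_iff (f := g), hletter,
      getElem?_eq_none_iff] at hw
    omega
  have hstep (j : ℕ) (h₁ : i ≤ L * j + d) (h₂ : L * j + d < i + 2 * (L * m)) :
      w[j]? = w[j + m]? := by
    apply Option.map_injective hg
    have := hper (L * j + d - i) (by omega)
    rw [show i + (L * j + d - i) = L * j + d by omega] at this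
    rw [hletter, hletter, mul_add, add_right_comm, this]
  have hi := Nat.div_add_mod i L
  have hiL := Nat.mod_lt i (Nat.zero_lt_of_lt hd)
  have hm : 0 < m := Nat.pos_of_ne_zero fun hm => by simp [hm] at hm0
  obtain ⟨a, ha₁, ha₂⟩ : ∃ a, i ≤ L * a + d ∧ L * a + d < i + L := by
    rcases le_or_gt (i % L) d with hr | hr
    · exact ⟨i / L, by omega, by omega⟩
    · exact ⟨i / L + 1, by rw [mul_add_one]; omega, by rw [mul_add_one]; omega⟩
  have hblock (t : ℕ) (ht : t < 2 * m) : L * (a + t) + d < i + 2 * (L * m) := by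
    have := Nat.mul_le_mul_left L (show t + 1 ≤ 2 * m by omega)
    rw [mul_add_one, mul_left_comm] at this
    rw [mul_add]; omega
  refine ⟨a, hasCubeAt_iff_getElem?.2 ⟨hm, ?_, fun t ht => hstep _ ?_ (hblock t ht)⟩⟩
  · have hlast := hblock (2 * m - 1) (by omega)
    have := hlt (a + (2 * m - 1) + m) (by rw [mul_add]; omega)
    omega
  · rw [mul_add]; omega

end UniformMorphism

theorem cubefreeMorphism_of_uniform {h : Bool → List Bool} {L d : ℕ}
    (hL : ∀ b, (h b).length = L)
    (hsync : ∀ a b c, ∀ r < L, 0 < r → ((h b ++ h c).drop r).take L ≠ h a)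
    {g : Bool → Bool} (hg : g.Injective) (hd : d < L) (hgd : ∀ b, (h b)[d]? = some (g b))
    (hshort : ∀ v : List Bool, v.length ≤ 4 → Cubefree v → Cubefree (v.flatMap h)) :
    CubefreeMorphism h := by
  intro w hw
  refine cubefree_iff_forall_not_hasCubeAt.2 fun i n hc => ?_
  rcases lt_or_ge n L with hn | hn
  · have hiL := Nat.mod_lt i (Nat.zero_lt_of_lt hd)
    exact (hshort _ (length_take_le _ _) (hw.infix (take_drop_infix w _ 4))).not_hasCubeAt _ _
      (hc.take_drop_flatMap hL (by omega))
  · obtain ⟨m, rfl⟩ := hc.dvd_of_flatMap hL hsync hn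
    obtain ⟨a, ha⟩ := hc.of_flatMap hL hg hd hgd
    exact hw.not_hasCubeAt a m ha

def φ₁₃ : Bool → List Bool := fun b =>
  if b then [false, false, true, false, false, true, true, false, false, true, false, true, true]
  else [false, false, true, false, false, true, false, true, true, false, false, true, true]

theorem length_φ₁₃ : ∀ b, (φ₁₃ b).length = 13 := by decide

theorem φ₁₃_synchronizing :
    ∀ a b c, ∀ r < 13, 0 < r → ((φ₁₃ b ++ φ₁₃ c).drop r).take 13 ≠ φ₁₃ a := by decide

theorem getElem?_φ₁₃_nine : ∀ b, (φ₁₃ b)[9]? = some b := by decide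

theorem cubefree_flatMap_φ₁₃_of_length_le_four (v : List Bool) (hv : v.length ≤ 4)
    (hcf : Cubefree v) : Cubefree (v.flatMap φ₁₃) := by
  have hcheck : ∀ n < 5, ∀ v ∈ (replicate n [false, true]).sections,
      Cubefree v → Cubefree (v.flatMap φ₁₃) := by decide +kernel
  have hmem (v : List Bool) : Forall₂ (· ∈ ·) v (replicate v.length [false, true]) := by
    induction v with
    | nil => exact .nil
    | cons b v ih => exact .cons (by cases b <;> simp) ih
  exact hcheck v.length (by omega) v (mem_sections.2 (hmem v)) hcf

theorem stmt12 :
    CubefreeMorphism (fun b =>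
      if b then [false, false, true, false, false, true, true, false, false, true, false, true, true]
      else [false, false, true, false, false, true, false, true, true, false, false, true, true]) :=
  cubefreeMorphism_of_uniform length_φ₁₃ φ₁₃_synchronizing Function.injective_id (by norm_num)
    getElem?_φ₁₃_nine cubefree_flatMap_φ₁₃_of_length_le_four
end
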